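/- Let 1 ≤ d < n be integers, let P ∈ ℝ^{d×n} have invertible leading d×d block P_I, set Q := P_I^{-1} P_II, and let α ≥ β ≥ 0, μ ∈ [0,α], ν ∈ [0,β]. Then there exists a constant C > 0, independent of K, L and of the coefficient family, such that for all positive integers K, L and every family c : ℤ^n → ℂ, (Σ_{k ∈ ℤ^n ∖ 𝒦_{K,L}} (‖k_I + Q k_II‖^{2μ} + ‖k_II‖^{2ν}) |c_k|²)^{1/2} ≤ C (K^{−α}+L^{−β})(K^{μ}+L^{ν}) (Σ_{k∈ℤ^n} (‖k_I + Q k_II‖^{2α} + ‖k_II‖^{2β})|c_k|²)^{1/2}, and the analogous inequality holds with each weight w replaced by 1 + w on both sides. -/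
import Mathlib

open scoped ENNReal

/-- Euclidean norm of a vector in `ℝ^m`. -/
noncomputable def euclNorm {m : ℕ} (x : Fin m → ℝ) : ℝ :=
  ‖(EuclideanSpace.equiv (Fin m) ℝ).symm x‖

/-- Mixed weight `‖k_I + Q k_II‖^(2α) + ‖k_II‖^(2β)` (real powers, `0⁰ = 1`). -/
noncomputable def wMix (d m : ℕ) (Q : Matrix (Fin d) (Fin m) ℝ) (α β : ℝ)
    (k : Fin (d + m) → ℤ) : ℝ :=
  euclNorm ((fun i => (k (Fin.castAdd m i) : ℝ)) +
      Q.mulVec fun j => (k (Fin.natAdd d j) : ℝ)) ^ (2 * α) +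
    euclNorm (fun j => (k (Fin.natAdd d j) : ℝ)) ^ (2 * β)

/-- Weight `‖P k‖^(2α)`. -/
noncomputable def wP (d m : ℕ) (P : Matrix (Fin d) (Fin (d + m)) ℝ) (α : ℝ)
    (k : Fin (d + m) → ℤ) : ℝ :=
  euclNorm (P.mulVec fun i => (k i : ℝ)) ^ (2 * α)

/-- Weight `‖k‖^(2β)`. -/
noncomputable def wFull (d m : ℕ) (β : ℝ) (k : Fin (d + m) → ℤ) : ℝ :=
  euclNorm (fun i => (k i : ℝ)) ^ (2 * β)

/-- Membership in the parallelogram index set `𝒦_{K,L}`: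
each component of `k_I + Q k_II` lies in `[-K, K)` and each component of `k_II` in `[-L, L)`. -/
def memK (d m : ℕ) (Q : Matrix (Fin d) (Fin m) ℝ) (K L : ℕ) (k : Fin (d + m) → ℤ) : Prop :=
  (∀ i : Fin d,
      -(K : ℝ) ≤ (k (Fin.castAdd m i) : ℝ) + Q.mulVec (fun j => (k (Fin.natAdd d j) : ℝ)) i ∧
      (k (Fin.castAdd m i) : ℝ) + Q.mulVec (fun j => (k (Fin.natAdd d j) : ℝ)) i < (K : ℝ)) ∧
  (∀ j : Fin m, -(L : ℤ) ≤ k (Fin.natAdd d j) ∧ k (Fin.natAdd d j) < (L : ℤ))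

lemma euclNorm_nonneg' {n : ℕ} (x : Fin n → ℝ) : 0 ≤ euclNorm x := norm_nonneg _

lemma abs_le_euclNorm {n : ℕ} (x : Fin n → ℝ) (i : Fin n) : |x i| ≤ euclNorm x := by
  have h : euclNorm x = Real.sqrt (∑ j, ‖x j‖ ^ 2) := by
    rw [euclNorm, EuclideanSpace.norm_eq]
    rfl
  rw [h]
  have : |x i| = Real.sqrt (‖x i‖ ^ 2) := by
    rw [Real.sqrt_sq_eq_abs, abs_norm, Real.norm_eq_abs]
  rw [this]
  apply Real.sqrt_le_sqrt
  exact Finset.single_le_sum (f := fun j => ‖x j‖ ^ 2) (fun j _ => sq_nonneg _)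
    (Finset.mem_univ i)

/-- one-sided core estimate -/
lemma coreA (X Y K L α β μ ν E : ℝ) (hY : 0 ≤ Y) (hK : 1 ≤ K) (hL : 1 ≤ L)
    (hα : 0 ≤ α) (hβ : 0 ≤ β) (hμ0 : 0 ≤ μ) (hμ : μ ≤ α) (hν0 : 0 ≤ ν) (hν : ν ≤ β)
    (hE1 : K ^ (-α) * K ^ μ ≤ E) (hE2 : K ^ (-α) * L ^ ν ≤ E) (hE3 : L ^ (-β) * L ^ ν ≤ E)
    (hKX : K ≤ X) :
    X ^ (2*μ) + Y ^ (2*ν) ≤ 2 * E^2 * (X ^ (2*α) + Y ^ (2*β)) ∧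
      1 ≤ E^2 * (X ^ (2*α) + Y ^ (2*β)) := by
  have hK0 : (0:ℝ) < K := lt_of_lt_of_le one_pos hK
  have hL0 : (0:ℝ) < L := lt_of_lt_of_le one_pos hL
  have hX0 : (0:ℝ) < X := lt_of_lt_of_le hK0 hKX
  have hX1 : (1:ℝ) ≤ X := hK.trans hKX
  have hXa : (0:ℝ) ≤ X ^ (2*α) := Real.rpow_nonneg hX0.le _
  have hYb : (0:ℝ) ≤ Y ^ (2*β) := Real.rpow_nonneg hY _
  have t1 : X ^ (2*μ) ≤ (K ^ (-α) * K ^ μ)^2 * X ^ (2*α) := by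
    have e1 : (K ^ (-α) * K ^ μ)^2 = K ^ (2*(μ - α)) := by
      rw [← Real.rpow_add hK0, ← Real.rpow_natCast (K ^ (-α + μ)) 2, ← Real.rpow_mul hK0.le]
      ring_nf
    have e2 : X ^ (2*μ) = X ^ (2*(μ - α)) * X ^ (2*α) := by
      rw [← Real.rpow_add hX0]; ring_nf
    rw [e1, e2]
    apply mul_le_mul_of_nonneg_right _ hXa
    exact Real.rpow_le_rpow_of_nonpos hK0 hKX (by linarith)
  have t1' : X ^ (2*μ) ≤ E^2 * X ^ (2*α) := by
    refine t1.trans (mul_le_mul_of_nonneg_right ?_ hXa)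
    exact pow_le_pow_left₀ (by positivity) hE1 2
  have hone : (1:ℝ) ≤ (K ^ (-α))^2 * X ^ (2*α) := by
    have h1 : K ^ (2*α) ≤ X ^ (2*α) := Real.rpow_le_rpow hK0.le hKX (by linarith)
    have h2 : (K ^ (-α))^2 * K ^ (2*α) = 1 := by
      rw [← Real.rpow_natCast (K ^ (-α)) 2, ← Real.rpow_mul hK0.le, ← Real.rpow_add hK0,
        show -α * ((2:ℕ):ℝ) + 2*α = 0 by push_cast; ring, Real.rpow_zero]
    calc (1:ℝ) = (K ^ (-α))^2 * K ^ (2*α) := h2.symm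
      _ ≤ (K ^ (-α))^2 * X ^ (2*α) := by
          apply mul_le_mul_of_nonneg_left h1 (by positivity)
  have t2 : Y ^ (2*ν) ≤ E^2 * (X ^ (2*α) + Y ^ (2*β)) := by
    rcases le_or_gt Y L with hYL | hLY
    · have h1 : Y ^ (2*ν) ≤ L ^ (2*ν) := Real.rpow_le_rpow hY hYL (by linarith)
      have h2 : L ^ (2*ν) = (L ^ ν)^2 := by
        rw [← Real.rpow_natCast (L ^ ν) 2, ← Real.rpow_mul hL0.le]; ring_nf
      have h3 : (L ^ ν)^2 ≤ (L ^ ν)^2 * ((K ^ (-α))^2 * X ^ (2*α)) :=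
        le_mul_of_one_le_right (by positivity) hone
      have h4 : (L ^ ν)^2 * ((K ^ (-α))^2 * X ^ (2*α)) = (K ^ (-α) * L ^ ν)^2 * X ^ (2*α) := by
        ring
      have h5 : (K ^ (-α) * L ^ ν)^2 * X ^ (2*α) ≤ E^2 * X ^ (2*α) :=
        mul_le_mul_of_nonneg_right (pow_le_pow_left₀ (by positivity) hE2 2) hXa
      nlinarith [sq_nonneg E]
    · have hY0 : (0:ℝ) < Y := hL0.trans hLY
      have h1 : Y ^ (2*ν) ≤ (L ^ (-β) * L ^ ν)^2 * Y ^ (2*β) := by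
        have e1 : (L ^ (-β) * L ^ ν)^2 = L ^ (2*(ν - β)) := by
          rw [← Real.rpow_add hL0, ← Real.rpow_natCast (L ^ (-β + ν)) 2, ← Real.rpow_mul hL0.le]
          ring_nf
        have e2 : Y ^ (2*ν) = Y ^ (2*(ν - β)) * Y ^ (2*β) := by
          rw [← Real.rpow_add hY0]; ring_nf
        rw [e1, e2]
        apply mul_le_mul_of_nonneg_right _ hYb
        exact Real.rpow_le_rpow_of_nonpos hL0 hLY.le (by linarith)
      have h5 : (L ^ (-β) * L ^ ν)^2 * Y ^ (2*β) ≤ E^2 * Y ^ (2*β) :=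
        mul_le_mul_of_nonneg_right (pow_le_pow_left₀ (by positivity) hE3 2) hYb
      nlinarith [sq_nonneg E]
  constructor
  · nlinarith [sq_nonneg E]
  · have h1 : (1:ℝ) ≤ X ^ (2*μ) := Real.one_le_rpow hX1 (by linarith)
    nlinarith [sq_nonneg E]

lemma genBound {ι : Type*} (p : ι → Prop) (w W n : ι → ℝ) (hn : ∀ i, 0 ≤ n i)
    (B : ℝ) (hB : 0 < B)
    (hpt : ∀ i, ¬ p i → w i ≤ B^2 * W i) :
    (∑' i : {i // ¬ p i}, ENNReal.ofReal (w i.1 * n i.1)) ^ ((1:ℝ)/2) ≤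
      ENNReal.ofReal B * (∑' i, ENNReal.ofReal (W i * n i)) ^ ((1:ℝ)/2) := by
  have key : ∀ i : {i // ¬ p i}, ENNReal.ofReal (w i.1 * n i.1) ≤
      ENNReal.ofReal (B^2) * ENNReal.ofReal (W i.1 * n i.1) := by
    intro i
    rw [← ENNReal.ofReal_mul (by positivity)]
    apply ENNReal.ofReal_le_ofReal
    have h1 := hpt i.1 i.2
    have h2 := hn i.1
    calc w i.1 * n i.1 ≤ (B^2 * W i.1) * n i.1 := mul_le_mul_of_nonneg_right h1 h2
      _ = B^2 * (W i.1 * n i.1) := by ring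
  have h1 : (∑' i : {i // ¬ p i}, ENNReal.ofReal (w i.1 * n i.1)) ≤
      ENNReal.ofReal (B^2) * ∑' i, ENNReal.ofReal (W i * n i) := by
    calc (∑' i : {i // ¬ p i}, ENNReal.ofReal (w i.1 * n i.1))
        ≤ ∑' i : {i // ¬ p i}, ENNReal.ofReal (B^2) * ENNReal.ofReal (W i.1 * n i.1) :=
          ENNReal.tsum_le_tsum key
      _ = ENNReal.ofReal (B^2) * ∑' i : {i // ¬ p i}, ENNReal.ofReal (W i.1 * n i.1) :=
          ENNReal.tsum_mul_left
      _ ≤ ENNReal.ofReal (B^2) * ∑' i, ENNReal.ofReal (W i * n i) := by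
          apply mul_le_mul_right
          exact ENNReal.tsum_comp_le_tsum_of_injective Subtype.val_injective _
  have h2 := ENNReal.rpow_le_rpow h1 (by norm_num : (0:ℝ) ≤ 1/2)
  rw [ENNReal.mul_rpow_of_nonneg _ _ (by norm_num : (0:ℝ) ≤ 1/2)] at h2
  have h3 : (ENNReal.ofReal (B^2)) ^ ((1:ℝ)/2) = ENNReal.ofReal B := by
    have hne : ENNReal.ofReal B ≠ 0 := by
      simp [ENNReal.ofReal_eq_zero, not_le, hB]
    rw [show B^2 = B * B by ring, ENNReal.ofReal_mul hB.le,
      show ENNReal.ofReal B * ENNReal.ofReal B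
        = ENNReal.ofReal B ^ ((1:ℝ) + 1) by
          rw [ENNReal.rpow_add _ _ hne ENNReal.ofReal_ne_top]; simp,
      ← ENNReal.rpow_mul]
    norm_num
  rwa [h3] at h2

set_option maxHeartbeats 1000000 in
/-- truncation error bound in the mixed (semi)norms
`|u - P_{K,L}u|_{μ,ν} ≤ C (K^{-α}+L^{-β})(K^μ+L^ν) |u|_{α,β}`, together with the
analogous inequality with each weight `w` replaced by `1 + w`. -/
theorem stmt7 (d m : ℕ) (hd : 1 ≤ d) (hm : 1 ≤ m)
    (P : Matrix (Fin d) (Fin (d + m)) ℝ)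
    (PI : Matrix (Fin d) (Fin d) ℝ) (hPI : PI = P.submatrix id (Fin.castAdd m))
    (PII : Matrix (Fin d) (Fin m) ℝ) (hPII : PII = P.submatrix id (Fin.natAdd d))
    (hinv : IsUnit PI)
    (Q : Matrix (Fin d) (Fin m) ℝ) (hQ : Q = PI⁻¹ * PII)
    (α β μ ν : ℝ) (hβ : 0 ≤ β) (hαβ : β ≤ α) (hμ0 : 0 ≤ μ) (hμ : μ ≤ α)
    (hν0 : 0 ≤ ν) (hν : ν ≤ β) :
    ∃ C : ℝ, 0 < C ∧ ∀ K L : ℕ, 0 < K → 0 < L → ∀ c : (Fin (d + m) → ℤ) → ℂ,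
      ((∑' k : {k : Fin (d + m) → ℤ // ¬ memK d m Q K L k},
          ENNReal.ofReal (wMix d m Q μ ν k.1 * ‖c k.1‖ ^ 2)) ^ ((1 : ℝ) / 2) ≤
        ENNReal.ofReal (C * ((K : ℝ) ^ (-α) + (L : ℝ) ^ (-β)) * ((K : ℝ) ^ μ + (L : ℝ) ^ ν)) *
          (∑' k : Fin (d + m) → ℤ,
            ENNReal.ofReal (wMix d m Q α β k * ‖c k‖ ^ 2)) ^ ((1 : ℝ) / 2)) ∧
      ((∑' k : {k : Fin (d + m) → ℤ // ¬ memK d m Q K L k},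
          ENNReal.ofReal ((1 + wMix d m Q μ ν k.1) * ‖c k.1‖ ^ 2)) ^ ((1 : ℝ) / 2) ≤
        ENNReal.ofReal (C * ((K : ℝ) ^ (-α) + (L : ℝ) ^ (-β)) * ((K : ℝ) ^ μ + (L : ℝ) ^ ν)) *
          (∑' k : Fin (d + m) → ℤ,
            ENNReal.ofReal ((1 + wMix d m Q α β k) * ‖c k‖ ^ 2)) ^ ((1 : ℝ) / 2)) := by
  have hα : 0 ≤ α := hβ.trans hαβ
  refine ⟨Real.sqrt 3, Real.sqrt_pos.mpr (by norm_num), ?_⟩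
  intro K L hK hL c
  set Kr : ℝ := (K : ℝ) with hKr
  set Lr : ℝ := (L : ℝ) with hLr
  have hK1 : (1:ℝ) ≤ Kr := by rw [hKr]; exact_mod_cast hK
  have hL1 : (1:ℝ) ≤ Lr := by rw [hLr]; exact_mod_cast hL
  have hK0 : (0:ℝ) < Kr := lt_of_lt_of_le one_pos hK1
  have hL0 : (0:ℝ) < Lr := lt_of_lt_of_le one_pos hL1
  set E : ℝ := (Kr ^ (-α) + Lr ^ (-β)) * (Kr ^ μ + Lr ^ ν) with hE
  have hEpos : 0 < E := by
    apply mul_pos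
    · have := Real.rpow_pos_of_pos hK0 (-α); have := Real.rpow_pos_of_pos hL0 (-β); linarith
    · have := Real.rpow_pos_of_pos hK0 μ; have := Real.rpow_pos_of_pos hL0 ν; linarith
  set B : ℝ := Real.sqrt 3 * (Kr ^ (-α) + Lr ^ (-β)) * (Kr ^ μ + Lr ^ ν) with hB
  have hBpos : 0 < B := by
    rw [hB, mul_assoc]
    exact mul_pos (Real.sqrt_pos.mpr (by norm_num)) hEpos
  have hB2 : B^2 = 3 * E^2 := by
    rw [hB, hE,
      show (Real.sqrt 3 * (Kr ^ (-α) + Lr ^ (-β)) * (Kr ^ μ + Lr ^ ν))^2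
        = Real.sqrt 3 ^ 2 * ((Kr ^ (-α) + Lr ^ (-β)) * (Kr ^ μ + Lr ^ ν))^2 from by ring,
      Real.sq_sqrt (by norm_num : (0:ℝ) ≤ 3)]
  -- product bounds
  have pKa : 0 ≤ Kr ^ (-α) := Real.rpow_nonneg hK0.le _
  have pLb : 0 ≤ Lr ^ (-β) := Real.rpow_nonneg hL0.le _
  have pKm : 0 ≤ Kr ^ μ := Real.rpow_nonneg hK0.le _
  have pLn : 0 ≤ Lr ^ ν := Real.rpow_nonneg hL0.le _
  have b1 : Kr ^ (-α) * Kr ^ μ ≤ E := by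
    rw [hE]; exact mul_le_mul (by linarith) (by linarith) pKm (by linarith)
  have b2 : Kr ^ (-α) * Lr ^ ν ≤ E := by
    rw [hE]; exact mul_le_mul (by linarith) (by linarith) pLn (by linarith)
  have b3 : Lr ^ (-β) * Lr ^ ν ≤ E := by
    rw [hE]; exact mul_le_mul (by linarith) (by linarith) pLn (by linarith)
  have b4 : Lr ^ (-β) * Kr ^ μ ≤ E := by
    rw [hE]; exact mul_le_mul (by linarith) (by linarith) pKm (by linarith)
  -- pointwise estimates
  have hpt : ∀ k : Fin (d + m) → ℤ, ¬ memK d m Q K L k →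
      wMix d m Q μ ν k ≤ 2 * E^2 * wMix d m Q α β k ∧ 1 ≤ E^2 * wMix d m Q α β k := by
    intro k hk
    set x : Fin d → ℝ := (fun i => (k (Fin.castAdd m i) : ℝ)) +
      Matrix.mulVec Q fun j => (k (Fin.natAdd d j) : ℝ) with hx
    set y : Fin m → ℝ := fun j => (k (Fin.natAdd d j) : ℝ) with hy
    set X : ℝ := euclNorm x with hX
    set Y : ℝ := euclNorm y with hY
    have hX0 : 0 ≤ X := euclNorm_nonneg' _
    have hY0 : 0 ≤ Y := euclNorm_nonneg' _
    have hcase : Kr ≤ X ∨ Lr ≤ Y := by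
      rw [memK, not_and_or] at hk
      rcases hk with h | h
      · left
        push_neg at h
        obtain ⟨i, hi⟩ := h
        have hxi : Kr ≤ |x i| := by
          rcases le_or_gt (-(Kr)) (x i) with h1 | h1
          · have := hi h1
            exact this.trans (le_abs_self _)
          · have : Kr ≤ -(x i) := by linarith
            exact this.trans (neg_le_abs _)
        exact hxi.trans (abs_le_euclNorm x i)
      · right
        push_neg at h
        obtain ⟨j, hj⟩ := h
        have hyj : (L:ℤ) ≤ |k (Fin.natAdd d j)| := by
          rcases le_or_gt (-(L:ℤ)) (k (Fin.natAdd d j)) with h1 | h1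
          · exact (hj h1).trans (le_abs_self _)
          · have : (L:ℤ) ≤ -(k (Fin.natAdd d j)) := by linarith
            exact this.trans (neg_le_abs _)
        have : Lr ≤ |y j| := by
          rw [hy]
          calc Lr = ((L:ℤ) : ℝ) := by rw [hLr]; push_cast; ring
            _ ≤ ((|k (Fin.natAdd d j)| : ℤ) : ℝ) := by exact_mod_cast hyj
            _ = |(k (Fin.natAdd d j) : ℝ)| := by push_cast; ring
        exact this.trans (abs_le_euclNorm y j)
    have hwμν : wMix d m Q μ ν k = X ^ (2*μ) + Y ^ (2*ν) := rfl
    have hwαβ : wMix d m Q α β k = X ^ (2*α) + Y ^ (2*β) := rfl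
    rw [hwμν, hwαβ]
    rcases hcase with hc | hc
    · exact coreA X Y Kr Lr α β μ ν E hY0 hK1 hL1 hα hβ hμ0 hμ hν0 hν b1 b2 b3 hc
    · obtain ⟨h1, h2⟩ := coreA Y X Lr Kr β α ν μ E hX0 hL1 hK1 hβ hα hν0 hν hμ0 hμ b3 b4 b1 hc
      constructor
      · linarith
      · linarith
  constructor
  · apply genBound (memK d m Q K L) (wMix d m Q μ ν) (wMix d m Q α β)
      (fun k => ‖c k‖ ^ 2) (fun k => sq_nonneg _) B hBpos
    intro k hk
    obtain ⟨h1, _⟩ := hpt k hk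
    have hw : 0 ≤ wMix d m Q α β k :=
      add_nonneg (Real.rpow_nonneg (euclNorm_nonneg' _) _)
        (Real.rpow_nonneg (euclNorm_nonneg' _) _)
    rw [hB2]
    nlinarith [mul_nonneg (sq_nonneg E) hw]
  · apply genBound (memK d m Q K L) (fun k => 1 + wMix d m Q μ ν k)
      (fun k => 1 + wMix d m Q α β k) (fun k => ‖c k‖ ^ 2) (fun k => sq_nonneg _) B hBpos
    intro k hk
    obtain ⟨h1, h2⟩ := hpt k hk
    rw [hB2]
    nlinarith [sq_nonneg E, h1, h2]
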